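/- Let a and b be nonreal quaternions with Re a = Re b and ‖a‖ = ‖b‖, and let c be a nonzero quaternion. Then there exists a quaternion x with a*x − x*b = c if and only if a*c = c*(star b). -/

import Mathlib

/-!
Subtracting the common real part reduces the equation to `u * x - x * v = c` with `u = Im a`,
`v = Im b`, whose squares are both the real number `-‖Im a‖² = -‖Im b‖²`. A solution forces
`u * c + c * v = u² * x - x * v² = 0`; conversely, if `c * v = -(u * c)` then `x = 2⁻¹ * u⁻¹ * c`
is a solution.
-/

open Quaternion

theorem exists_mul_sub_mul_eq_iff_of_mul_self_eq {R : Type*} [DivisionRing R] [NeZero (2 : R)]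
    {u v : R} (hu : u ≠ 0) (huv : u * u = v * v) (hcomm : ∀ x, Commute (u * u) x) (c : R) :
    (∃ x, u * x - x * v = c) ↔ u * c + c * v = 0 := by
  constructor
  · rintro ⟨x, rfl⟩
    calc u * (u * x - x * v) + (u * x - x * v) * v = u * u * x - x * (v * v) := by noncomm_ring
      _ = 0 := by rw [← huv, (hcomm x).eq, sub_self]
  · intro h
    have hcv : c * v = -(u * c) := eq_neg_of_add_eq_zero_right h
    have h2 : Commute (2⁻¹ : R) u := (Commute.ofNat_left 2 u).inv_left₀
    refine ⟨2⁻¹ * u⁻¹ * c, ?_⟩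
    calc u * (2⁻¹ * u⁻¹ * c) - 2⁻¹ * u⁻¹ * c * v = 2⁻¹ * c + 2⁻¹ * c := by
          rw [mul_assoc _ c, hcv, ← mul_assoc, ← mul_assoc, ← h2.eq, mul_inv_cancel_right₀ hu,
            mul_neg, mul_assoc, inv_mul_cancel_left₀ hu, sub_neg_eq_add]
      _ = c := by rw [← two_mul, ← mul_assoc, mul_inv_cancel₀ two_ne_zero, one_mul]

namespace Quaternion

section CommRing

variable {R : Type*} [CommRing R]

theorem mul_sub_mul_eq_im_mul_sub_mul_im {a b : ℍ[R]} (hre : a.re = b.re) (x : ℍ[R]) :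
    a * x - x * b = a.im * x - x * b.im := by
  conv_lhs => rw [← re_add_im a, ← re_add_im b, hre]
  rw [add_mul, mul_add, coe_commutes]
  abel

theorem mul_sub_mul_star_eq_im_mul_add_mul_im {a b : ℍ[R]} (hre : a.re = b.re) (c : ℍ[R]) :
    a * c - c * star b = a.im * c + c * b.im := by
  conv_lhs => rw [← re_add_im a, ← re_add_im b, star_add, star_coe, star_im, hre]
  rw [add_mul, mul_add, coe_commutes, mul_neg]
  abel

theorem im_mul_self (a : ℍ[R]) : a.im * a.im = ↑(-normSq a.im) := by
  rw [← sq, im_sq, coe_neg]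

theorem commute_im_mul_self (a x : ℍ[R]) : Commute (a.im * a.im) x := by
  rw [im_mul_self]
  exact coe_commute _ x

theorem normSq_eq_re_sq_add_normSq_im (a : ℍ[R]) : normSq a = a.re ^ 2 + normSq a.im := by
  simp only [normSq_def', re_im, imI_im, imJ_im, imK_im]
  ring

instance [CharZero R] : CharZero ℍ[R] :=
  charZero_of_injective_algebraMap coe_injective

end CommRing

theorem im_mul_self_eq_of_re_eq_of_norm_eq {a b : ℍ[ℝ]} (hre : a.re = b.re) (hnorm : ‖a‖ = ‖b‖) :
    a.im * a.im = b.im * b.im := by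
  have h : normSq a = normSq b := by
    rw [normSq_eq_norm_mul_self, normSq_eq_norm_mul_self, hnorm]
  rw [normSq_eq_re_sq_add_normSq_im a, normSq_eq_re_sq_add_normSq_im b, hre, add_right_inj] at h
  rw [im_mul_self, im_mul_self, h]

end Quaternion

theorem inhomogeneous_sylvester_solvability_general (a b c : ℍ[ℝ])
    (ha : a.im ≠ 0)
    (hre : a.re = b.re) (hnorm : ‖a‖ = ‖b‖) :
    (∃ x : ℍ[ℝ], a * x - x * b = c) ↔ a * c = c * star b := by
  simp only [mul_sub_mul_eq_im_mul_sub_mul_im hre, ← sub_eq_zero (a := a * c),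
    mul_sub_mul_star_eq_im_mul_add_mul_im hre]
  exact exists_mul_sub_mul_eq_iff_of_mul_self_eq ha (im_mul_self_eq_of_re_eq_of_norm_eq hre hnorm)
    (commute_im_mul_self a) c

theorem inhomogeneous_sylvester_solvability (a b c : ℍ[ℝ])
    (ha : a.im ≠ 0) (hb : b.im ≠ 0)
    (hre : a.re = b.re) (hnorm : ‖a‖ = ‖b‖) (hc : c ≠ 0) :
    (∃ x : ℍ[ℝ], a * x - x * b = c) ↔ a * c = c * star b :=
  inhomogeneous_sylvester_solvability_general a b c ha hre hnorm
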